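/- arXiv:1306.2360 — 7 statements merged into one kernel-verified Lean document; each statement's English description precedes it below -/
import Mathlib

section
/- Let (ζ^E_l, m^E_l)_{l≥1} be the EDF trace and (ζ_l, m_l)_{l≥1} be any work-conserving schedule trace with the same initial state, ζ_1 = ζ^E_1. Then for every interval l ≥ 1 and every k ∈ {1,…,K}, the tail sums satisfy ∑_{i=k}^{K} ζ_l(i) ≤ ∑_{i=k}^{K} ζ^E_l(i). (This is the core deterministic dominance claim underlying the paper's Theorem that EDF minimizes the expected number of idle time slots.) -/
open Finset

/-- A work-conserving schedule trace for the homogeneous interval model: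
`ζ l k` is the number of buffered packets at the start of interval `l` that expire in
`k` intervals, `m l k` the number of such packets delivered during interval `l`,
`j l` the number of successful transmissions in interval `l`, all deadlines in
`{1,…,K}`, and `N` new packets (with deadline `K` intervals away) arrive at the
start of each interval. -/
def WorkConserving (K N : ℕ) (j : ℕ → ℕ) (ζ : ℕ → ℕ → ℕ) (m : ℕ → ℕ → ℕ) : Prop :=
  (∀ l, 1 ≤ l → ∀ i ∈ Icc 1 K, m l i ≤ ζ l i) ∧
  (∀ l, 1 ≤ l → ∑ i ∈ Icc 1 K, m l i = min (j l) (∑ i ∈ Icc 1 K, ζ l i)) ∧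
  (∀ l, 1 ≤ l → ∀ k, 1 ≤ k → k ≤ K - 1 → ζ (l + 1) k = ζ l (k + 1) - m l (k + 1)) ∧
  (∀ l, 1 ≤ l → ζ (l + 1) K = N)

/-- The Earliest Deadline First deliveries: in each interval, packets are served in
increasing order of deadline, so a packet with deadline `i` intervals away is served
only after all packets with closer deadlines. -/
def IsEDF (K : ℕ) (j : ℕ → ℕ) (ζ : ℕ → ℕ → ℕ) (m : ℕ → ℕ → ℕ) : Prop :=
  ∀ l, 1 ≤ l → ∀ i ∈ Icc 1 K,
    m l i = min (ζ l i) (j l - ∑ i' ∈ Icc 1 (i - 1), ζ l i')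

/-- Splitting a sum over `Icc 1 K` at `k`. -/
lemma sum_split_at (f : ℕ → ℕ) {k K : ℕ} (h2 : k ≤ K) :
    ∑ i ∈ Icc 1 K, f i = ∑ i ∈ Icc 1 k, f i + ∑ i ∈ Icc (k + 1) K, f i := by
  have h0 : (0 : ℕ) ≤ k := Nat.zero_le k
  rw [show Icc 1 K = Ioc 0 K from (Finset.Icc_add_one_left_eq_Ioc 0 K).symm,
    show Icc 1 k = Ioc 0 k from (Finset.Icc_add_one_left_eq_Ioc 0 k).symm,
    show Icc (k + 1) K = Ioc k K from Finset.Icc_add_one_left_eq_Ioc k K,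
    Finset.sum_Ioc_consecutive f h0 h2]

/-- EDF serves prefixes greedily: the total served among deadlines `1..k` is
`min (j l) (total buffered among deadlines 1..k)`. -/
lemma edf_prefix (K : ℕ) (j : ℕ → ℕ) (ζE mE : ℕ → ℕ → ℕ)
    (hEedf : IsEDF K j ζE mE) (l : ℕ) (hl : 1 ≤ l) :
    ∀ k, k ≤ K → ∑ i ∈ Icc 1 k, mE l i = min (j l) (∑ i ∈ Icc 1 k, ζE l i) := by
  intro k
  induction k with
  | zero => intro _; simp
  | succ n ih =>
    intro hnK
    have hn : n ≤ K := by omega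
    have hm := hEedf l hl (n + 1) (by simp; omega)
    simp only [Nat.add_sub_cancel] at hm
    rw [Finset.sum_Icc_succ_top (by omega : 1 ≤ n + 1),
      Finset.sum_Icc_succ_top (by omega : 1 ≤ n + 1), ih hn, hm]
    omega

/-- One-step evolution of tail sums for a work-conserving trace. -/
lemma tail_step (K N : ℕ) (j : ℕ → ℕ) (ζ m : ℕ → ℕ → ℕ)
    (hwc : WorkConserving K N j ζ m) (l : ℕ) (hl : 1 ≤ l)
    (k : ℕ) (h1 : 1 ≤ k) (h2 : k ≤ K) :
    ∑ i ∈ Icc k K, ζ (l + 1) i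
      = (∑ i ∈ Icc (k + 1) K, ζ l i) - (∑ i ∈ Icc (k + 1) K, m l i) + N := by
  obtain ⟨hle, -, hev, hN⟩ := hwc
  have hK1 : K - 1 + 1 = K := by omega
  have hstep : ∑ i ∈ Icc k K, ζ (l + 1) i
      = ∑ i ∈ Icc k (K - 1), ζ (l + 1) i + ζ (l + 1) K := by
    have := Finset.sum_Icc_succ_top (by omega : k ≤ (K - 1) + 1) (ζ (l + 1))
    rwa [hK1] at this
  have hcongr : ∑ i ∈ Icc k (K - 1), ζ (l + 1) i
      = ∑ i ∈ Icc k (K - 1), (ζ l (i + 1) - m l (i + 1)) := by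
    refine Finset.sum_congr rfl fun i hi => ?_
    simp only [Finset.mem_Icc] at hi
    exact hev l hl i (by omega) hi.2
  have hmap : ∑ i ∈ Icc (k + 1) K, (ζ l i - m l i)
      = ∑ i ∈ Icc k (K - 1), (ζ l (i + 1) - m l (i + 1)) := by
    rw [show Icc (k + 1) K = Icc (k + 1) (K - 1 + 1) by rw [hK1],
      show (k + 1 : ℕ) = k + 1 from rfl]
    rw [← Finset.map_add_right_Icc k (K - 1) 1, Finset.sum_map]
    rfl
  have hsub : ∑ i ∈ Icc (k + 1) K, (ζ l i - m l i)
      = (∑ i ∈ Icc (k + 1) K, ζ l i) - (∑ i ∈ Icc (k + 1) K, m l i) := by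
    refine Finset.sum_tsub_distrib _ fun i hi => ?_
    simp only [Finset.mem_Icc] at hi
    exact hle l hl i (by simp; omega)
  rw [hstep, hcongr, ← hmap, hsub, hN l hl]

/-- The EDF trace dominates every work-conserving trace (with the same initial state and
the same success sequence `j`) in all tail sums of the buffered-packet state. -/
theorem edf_dominates_tail_sums
    (K N : ℕ) (hK : 1 ≤ K) (j : ℕ → ℕ)
    (ζE mE ζ m : ℕ → ℕ → ℕ)
    (hEwc : WorkConserving K N j ζE mE) (hEedf : IsEDF K j ζE mE)
    (hwc : WorkConserving K N j ζ m)
    (hinit : ∀ i ∈ Icc 1 K, ζ 1 i = ζE 1 i) :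
    ∀ l, 1 ≤ l → ∀ k ∈ Icc 1 K,
      ∑ i ∈ Icc k K, ζ l i ≤ ∑ i ∈ Icc k K, ζE l i := by
  intro l hl
  induction l, hl using Nat.le_induction with
  | base =>
    intro k hk
    simp only [Finset.mem_Icc] at hk
    refine le_of_eq (Finset.sum_congr rfl fun i hi => ?_)
    simp only [Finset.mem_Icc] at hi
    exact hinit i (by simp; omega)
  | succ l hl ih =>
    intro k hk
    simp only [Finset.mem_Icc] at hk
    obtain ⟨hk1, hk2⟩ := hk
    by_cases hkK : k = K
    · subst hkK
      rw [Finset.Icc_self, Finset.sum_singleton, Finset.sum_singleton,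
        hwc.2.2.2 l hl, hEwc.2.2.2 l hl]
    · have hkK' : k + 1 ≤ K := by omega
      rw [tail_step K N j ζ m hwc l hl k hk1 hk2,
        tail_step K N j ζE mE hEwc l hl k hk1 hk2]
      -- notation
      set b := ∑ i ∈ Icc (k + 1) K, ζ l i with hb_def
      set bE := ∑ i ∈ Icc (k + 1) K, ζE l i with hbE_def
      set M := ∑ i ∈ Icc (k + 1) K, m l i with hM_def
      set ME := ∑ i ∈ Icc (k + 1) K, mE l i with hME_def
      set s := ∑ i ∈ Icc 1 k, ζ l i with hs_def
      set sE := ∑ i ∈ Icc 1 k, ζE l i with hsE_def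
      set p := ∑ i ∈ Icc 1 k, m l i with hp_def
      have hbbE : b ≤ bE := ih (k + 1) (by simp; omega)
      have haaE : s + b ≤ sE + bE := by
        have := ih 1 (by simp; omega)
        rwa [sum_split_at (ζ l) hk2, sum_split_at (ζE l) hk2] at this
      have hps : p ≤ s := by
        refine Finset.sum_le_sum fun i hi => ?_
        simp only [Finset.mem_Icc] at hi
        exact hwc.1 l hl i (by simp; omega)
      have hMb : M ≤ b := by
        refine Finset.sum_le_sum fun i hi => ?_
        simp only [Finset.mem_Icc] at hi
        exact hwc.1 l hl i (by simp; omega)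
      have hMEbE : ME ≤ bE := by
        refine Finset.sum_le_sum fun i hi => ?_
        simp only [Finset.mem_Icc] at hi
        exact hEwc.1 l hl i (by simp; omega)
      have htot : p + M = min (j l) (s + b) := by
        have h1 := hwc.2.1 l hl
        rwa [sum_split_at (m l) hk2, sum_split_at (ζ l) hk2] at h1
      have htotE : min (j l) sE + ME = min (j l) (sE + bE) := by
        have h1 := hEwc.2.1 l hl
        rw [sum_split_at (mE l) hk2, sum_split_at (ζE l) hk2,
          edf_prefix K j ζE mE hEedf l hl k hk2] at h1
        exact h1
      omega
end

section
/- For the EDF trace (ζ_l, m_l)_{l≥1}, the tail sums obey the closed-form one-step update: for every interval l ≥ 1 and every k ∈ {1,…,K}, ∑_{i=k}^{K} ζ_{l+1}(i) = N + ( ∑_{i=k+1}^{K} ζ_l(i) − ( j(l) − ∑_{i=1}^{k} ζ_l(i) )⁺ )⁺, where empty sums are 0. -/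
open Finset

lemma key_tail (ζ : ℕ → ℕ) (jl K : ℕ) :
    ∀ d k, k + d = K →
      ∑ i ∈ Icc (k + 1) K, (ζ i - (jl - ∑ i' ∈ Icc 1 (i - 1), ζ i'))
        = (∑ i ∈ Icc (k + 1) K, ζ i) - (jl - ∑ i' ∈ Icc 1 k, ζ i') := by
  intro d
  induction d with
  | zero =>
    intro k hk
    subst hk
    simp
  | succ n ih =>
    intro k hk
    have h1 : Icc (k + 1) K = insert (k + 1) (Icc (k + 2) K) := by
      exact (Finset.insert_Icc_add_one_left_eq_Icc (a := k + 1) (b := K) (by omega)).symm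
    rw [h1, Finset.sum_insert (by simp), Finset.sum_insert (by simp),
      ih (k + 1) (by omega)]
    have h2 : ∑ i' ∈ Icc 1 (k + 1), ζ i' = (∑ i' ∈ Icc 1 k, ζ i') + ζ (k + 1) :=
      Finset.sum_Icc_succ_top (by omega) _
    simp only [Nat.add_sub_cancel]
    rw [h2, show k + 1 + 1 = k + 2 from rfl]
    omega
/-- Closed-form one-step update of the tail sums of the state under the EDF trace:
`∑_{i=k}^{K} ζ_{l+1}(i) = N + (∑_{i=k+1}^{K} ζ_l(i) − (j(l) − ∑_{i=1}^{k} ζ_l(i))⁺)⁺`,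
where the positive parts are realized by truncated subtraction on `ℕ`. -/
theorem edf_tail_sum_update
    (K N : ℕ) (hK : 1 ≤ K) (j : ℕ → ℕ)
    (ζ m : ℕ → ℕ → ℕ)
    (hwc : WorkConserving K N j ζ m) (hedf : IsEDF K j ζ m) :
    ∀ l, 1 ≤ l → ∀ k ∈ Icc 1 K,
      ∑ i ∈ Icc k K, ζ (l + 1) i
        = N + (∑ i ∈ Icc (k + 1) K, ζ l i - (j l - ∑ i ∈ Icc 1 k, ζ l i)) := by
  obtain ⟨hle, hsum, hrec, hN⟩ := hwc
  intro l hl k hk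
  simp only [Finset.mem_Icc] at hk
  obtain ⟨hk1, hkK⟩ := hk
  obtain ⟨K', rfl⟩ : ∃ K', K = K' + 1 := ⟨K - 1, by omega⟩
  rw [Finset.sum_Icc_succ_top (by omega), hN l hl]
  have hstep : ∀ i ∈ Icc k K', ζ (l + 1) i
      = ζ l (i + 1) - (j l - ∑ i' ∈ Icc 1 i, ζ l i') := by
    intro i hi
    simp only [Finset.mem_Icc] at hi
    rw [hrec l hl i (by omega) (by omega),
      hedf l hl (i + 1) (by simp only [Finset.mem_Icc]; omega)]
    simp only [Nat.add_sub_cancel]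
    omega
  rw [Finset.sum_congr rfl hstep]
  have hre : ∑ i ∈ Icc k K', (ζ l (i + 1) - (j l - ∑ i' ∈ Icc 1 i, ζ l i'))
      = ∑ i ∈ Icc (k + 1) (K' + 1), (ζ l i - (j l - ∑ i' ∈ Icc 1 (i - 1), ζ l i')) := by
    rw [← Finset.map_add_right_Icc k K' 1, Finset.sum_map]
    simp [addRightEmbedding]
  rw [hre, key_tail (ζ l) (j l) (K' + 1) (K' + 1 - k) k (by omega)]
  omega
end

section
/- For any work-conserving schedule trace (ζ_l, m_l)_{l≥1}, the tail sums obey the one-step upper bound: for every interval l ≥ 1 and every k ∈ {1,…,K}, ∑_{i=k}^{K} ζ_{l+1}(i) ≤ N + ( ∑_{i=k+1}^{K} ζ_l(i) − ( j(l) − ∑_{i=1}^{k} ζ_l(i) )⁺ )⁺, where empty sums are 0. -/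
open Finset

/-- One-step upper bound on the tail sums of the state under any work-conserving trace:
`∑_{i=k}^{K} ζ_{l+1}(i) ≤ N + (∑_{i=k+1}^{K} ζ_l(i) − (j(l) − ∑_{i=1}^{k} ζ_l(i))⁺)⁺`,
where the positive parts are realized by truncated subtraction on `ℕ`. -/
theorem workConserving_tail_sum_update_le
    (K N : ℕ) (hK : 1 ≤ K) (j : ℕ → ℕ)
    (ζ m : ℕ → ℕ → ℕ)
    (hwc : WorkConserving K N j ζ m) :
    ∀ l, 1 ≤ l → ∀ k ∈ Icc 1 K,
      ∑ i ∈ Icc k K, ζ (l + 1) i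
        ≤ N + (∑ i ∈ Icc (k + 1) K, ζ l i - (j l - ∑ i ∈ Icc 1 k, ζ l i)) := by
  obtain ⟨hm, hsum, hrec, hN⟩ := hwc
  intro l hl k hk
  simp only [mem_Icc] at hk
  obtain ⟨hk1, hkK⟩ := hk
  obtain ⟨K', rfl⟩ : ∃ K', K = K' + 1 := ⟨K - 1, (Nat.succ_pred_eq_of_pos hK).symm⟩
  -- rewrite LHS
  have h1 : ∑ i ∈ Icc k (K' + 1), ζ (l + 1) i
      = (∑ i ∈ Icc k K', ζ (l + 1) i) + N := by
    rw [Finset.sum_Icc_succ_top hkK (ζ (l+1)), hN l hl]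
  have h2 : ∑ i ∈ Icc k K', ζ (l + 1) i
      = ∑ i ∈ Icc (k + 1) (K' + 1), (ζ l i - m l i) := by
    rw [← Finset.map_add_right_Icc k K' 1, Finset.sum_map]
    refine Finset.sum_congr rfl fun i hi => ?_
    simp only [mem_Icc] at hi
    exact hrec l hl i (le_trans hk1 hi.1) (by omega)
  have hmle : ∀ i ∈ Icc (k + 1) (K' + 1), m l i ≤ ζ l i :=
    fun i hi => hm l hl i (by simp only [mem_Icc] at hi ⊢; omega)
  have h3 : ∑ i ∈ Icc (k + 1) (K' + 1), (ζ l i - m l i)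
      = ∑ i ∈ Icc (k + 1) (K' + 1), ζ l i - ∑ i ∈ Icc (k + 1) (K' + 1), m l i :=
    Finset.sum_tsub_distrib _ hmle
  rw [h1, h2, h3, add_comm]
  refine Nat.add_le_add_left ?_ N
  set S := ∑ i ∈ Icc 1 k, ζ l i
  set T := ∑ i ∈ Icc (k + 1) (K' + 1), ζ l i
  set M' := ∑ i ∈ Icc (k + 1) (K' + 1), m l i
  -- split full sums
  have e1 : Icc 1 k = Ioc 0 k := Finset.Icc_add_one_left_eq_Ioc 0 k
  have e2 : Icc (k + 1) (K' + 1) = Ioc k (K' + 1) := Finset.Icc_add_one_left_eq_Ioc k (K' + 1)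
  have e3 : Icc 1 (K' + 1) = Ioc 0 (K' + 1) := Finset.Icc_add_one_left_eq_Ioc 0 (K' + 1)
  have hsplitζ : S + T = ∑ i ∈ Icc 1 (K' + 1), ζ l i := by
    simp only [S, T, e1, e2, e3]
    exact Finset.sum_Ioc_consecutive _ (Nat.zero_le k) hkK
  have hsplitm : (∑ i ∈ Icc 1 k, m l i) + M' = ∑ i ∈ Icc 1 (K' + 1), m l i := by
    simp only [M', e1, e2, e3]
    exact Finset.sum_Ioc_consecutive _ (Nat.zero_le k) hkK
  have hmS : ∑ i ∈ Icc 1 k, m l i ≤ S :=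
    Finset.sum_le_sum fun i hi => hm l hl i (by simp only [mem_Icc] at hi ⊢; omega)
  have htot := hsum l hl
  rw [← hsplitm, ← hsplitζ] at htot
  rcases le_or_gt (j l) (S + T) with hc | hc
  · rw [min_eq_left hc] at htot
    refine tsub_le_tsub_left ?_ T
    omega
  · rw [min_eq_right hc.le] at htot
    have : T ≤ M' := by omega
    simp [Nat.sub_eq_zero_of_le this]
end

section
/- For the EDF trace (ζ_l, m_l)_{l≥1}, the deliveries telescope: for every interval l ≥ 1 and every k ∈ {0,1,…,K}, ∑_{i=k+1}^{K} m_l(i) = min( ∑_{i=k+1}^{K} ζ_l(i), ( j(l) − ∑_{i=1}^{k} ζ_l(i) )⁺ ), where empty sums are 0. In particular (k = 0), EDF delivers exactly min(j(l), ∑_{i=1}^{K} ζ_l(i)) packets in interval l. -/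
open Finset

/-- The state update of the EDF trace: buffered packets age by one interval and `N`
fresh packets with deadline `K` intervals away arrive at each interval start. -/
def EDFUpdate (K N : ℕ) (ζ : ℕ → ℕ → ℕ) (m : ℕ → ℕ → ℕ) : Prop :=
  (∀ l, 1 ≤ l → ∀ k, 1 ≤ k → k ≤ K - 1 → ζ (l + 1) k = ζ l (k + 1) - m l (k + 1)) ∧
  (∀ l, 1 ≤ l → ζ (l + 1) K = N)

/-- Under the EDF trace the deliveries telescope: for every `l ≥ 1` and `0 ≤ k ≤ K`,
`∑_{i=k+1}^{K} m_l(i) = min(∑_{i=k+1}^{K} ζ_l(i), (j(l) − ∑_{i=1}^{k} ζ_l(i))⁺)`.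
In particular (`k = 0`), EDF delivers exactly `min(j(l), ∑_{i=1}^{K} ζ_l(i))`
packets in interval `l`. -/
theorem edf_deliveries_telescope
    (K N : ℕ) (hK : 1 ≤ K) (j : ℕ → ℕ)
    (ζ m : ℕ → ℕ → ℕ)
    (hedf : IsEDF K j ζ m) (hupd : EDFUpdate K N ζ m) :
    ∀ l, 1 ≤ l → ∀ k, k ≤ K →
      ∑ i ∈ Icc (k + 1) K, m l i
        = min (∑ i ∈ Icc (k + 1) K, ζ l i) (j l - ∑ i ∈ Icc 1 k, ζ l i) := by
  intro l hl
  have key : ∀ d k, k ≤ K → K - k = d →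
      ∑ i ∈ Icc (k + 1) K, m l i
        = min (∑ i ∈ Icc (k + 1) K, ζ l i) (j l - ∑ i ∈ Icc 1 k, ζ l i) := by
    intro d
    induction d with
    | zero =>
      intro k hk hd
      have hkK : k = K := by omega
      subst hkK
      simp
    | succ d ih =>
      intro k hk hd
      have hk1 : k + 1 ≤ K := by omega
      have hIH := ih (k + 1) hk1 (by omega)
      have hm := hedf l hl (k + 1) (by simp [hk1])
      simp only [Nat.add_sub_cancel] at hm
      rw [show Icc (k + 1 + 1) K = Ioc (k + 1) K from Finset.Icc_add_one_left_eq_Ioc _ _] at hIH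
      rw [Finset.Icc_eq_cons_Ioc hk1, Finset.sum_cons, Finset.sum_cons, hIH, hm]
      rw [show Icc 1 (k + 1) = Icc 1 k ∪ {k + 1} by
        rw [Finset.union_comm]
        ext x; simp; omega]
      rw [Finset.sum_union (by simp)]
      simp only [Finset.sum_singleton]
      omega
  intro k hk
  exact key (K - k) k hk rfl
end

section
/- Let w ≥ 0 be a real number, M ≥ 1 an integer, and u : ℕ → ℝ with 0 ≤ u(t) ≤ 1 for all t. Let d : ℕ → ℝ satisfy d(0) ≥ 0 and the truncated time debt recursion d(t+1) = ( d(t) + M·w·1(t+1 ≡ 1 (mod M)) − u(t+1) )⁺. Then for every k ∈ ℕ, d((k+1)M) − d(kM) ≤ ( M·w − ∑_{t=kM+1}^{(k+1)M} u(t) )⁺. -/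
/-- The frame-level change of the truncated time debt is at most
`(M·w − ∑_{t=kM+1}^{(k+1)M} u(t))⁺`. The debt increases by `M·w` at the first slot of
each frame of `M` consecutive slots (the slots `t` with `t ≡ 1 (mod M)`), decreases by
`u(t) ∈ [0,1]` at each slot `t`, and is truncated at `0` (`x⁺ = max(x, 0)`). -/
theorem debt_frame_update_le (w : ℝ) (hw : 0 ≤ w) (M : ℕ) (hM : 1 ≤ M)
    (u : ℕ → ℝ) (hu : ∀ t, 0 ≤ u t ∧ u t ≤ 1)
    (d : ℕ → ℝ) (hd0 : 0 ≤ d 0)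
    (hd : ∀ t, d (t + 1) =
      max (d t + M * w * (if (t + 1) % M = 1 % M then 1 else 0) - u (t + 1)) 0) :
    ∀ k : ℕ, d ((k + 1) * M) - d (k * M) ≤
      max (M * w - ∑ t ∈ Finset.Icc (k * M + 1) ((k + 1) * M), u t) 0 := by
  intro k
  have hdnn : ∀ t, 0 ≤ d t := by
    intro t
    cases t with
    | zero => exact hd0
    | succ n => rw [hd n]; exact le_max_right _ _
  -- key claim: for 1 ≤ j ≤ M,
  -- d (k*M + j) ≤ max (d (k*M) + M*w − ∑_{t=kM+1}^{kM+j} u t) 0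
  have key : ∀ j, 1 ≤ j → j ≤ M →
      d (k * M + j) ≤
        max (d (k * M) + M * w - ∑ t ∈ Finset.Icc (k * M + 1) (k * M + j), u t) 0 := by
    intro j
    induction j with
    | zero => intro h; omega
    | succ n ih =>
      intro _ hnM
      rcases Nat.eq_zero_or_pos n with hn | hn
      · subst hn
        have hmod : (k * M + 1) % M = 1 % M := by
          rw [add_comm, Nat.add_mul_mod_self_right]
        rw [show k * M + 1 = k * M + 0 + 1 by ring, hd, hmod, if_pos rfl]
        simp [Finset.Icc_self]
      · have ih' := ih hn (le_trans (Nat.le_succ n) hnM)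
        have hmod : (k * M + (n + 1)) % M ≠ 1 % M := by
          have h1 : (k * M + (n + 1)) % M = (n + 1) % M := by
            rw [add_comm, Nat.add_mul_mod_self_right]
          rw [h1]
          rcases Nat.lt_or_ge (n + 1) M with h | h
          · rw [Nat.mod_eq_of_lt h]
            have : 1 % M ≤ 1 := Nat.mod_le _ _
            omega
          · have hnM1 : n + 1 = M := by omega
            rw [hnM1, Nat.mod_self]
            have hM2 : 2 ≤ M := by omega
            rw [Nat.mod_eq_of_lt hM2]
            omega
        have hrec := hd (k * M + n)
        rw [show k * M + n + 1 = k * M + (n + 1) by ring] at hrec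
        rw [hrec, if_neg hmod]
        have hsum : ∑ t ∈ Finset.Icc (k * M + 1) (k * M + (n + 1)), u t =
            (∑ t ∈ Finset.Icc (k * M + 1) (k * M + n), u t) + u (k * M + (n + 1)) := by
          rw [show k * M + (n + 1) = (k * M + n) + 1 by ring,
            Finset.sum_Icc_succ_top (by omega)]
        have hu1 := (hu (k * M + (n + 1))).1
        rw [hsum]
        rw [mul_zero, add_zero]
        apply max_le
        · calc d (k * M + n) - u (k * M + (n + 1)) ≤
              max (d (k * M) + M * w - ∑ t ∈ Finset.Icc (k * M + 1) (k * M + n), u t) 0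
                - u (k * M + (n + 1)) := by linarith
          _ ≤ _ := by
              rcases max_cases (d (k * M) + M * w -
                  ∑ t ∈ Finset.Icc (k * M + 1) (k * M + n), u t) (0 : ℝ) with ⟨h1, _⟩ | ⟨h1, _⟩
              · rw [h1]
                exact le_max_of_le_left (by linarith)
              · rw [h1]
                exact le_max_of_le_right (by linarith)
        · exact le_max_right _ _
  have hkey := key M hM le_rfl
  have heq : k * M + M = (k + 1) * M := by ring
  rw [heq] at hkey
  have hdk := hdnn (k * M)
  rcases max_cases (d (k * M) + M * w -
      ∑ t ∈ Finset.Icc (k * M + 1) ((k + 1) * M), u t) (0 : ℝ) with ⟨h1, _⟩ | ⟨h1, _⟩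
  · rw [h1] at hkey
    have : M * w - ∑ t ∈ Finset.Icc (k * M + 1) ((k + 1) * M), u t ≤
        max (M * w - ∑ t ∈ Finset.Icc (k * M + 1) ((k + 1) * M), u t) 0 :=
      le_max_left _ _
    linarith
  · rw [h1] at hkey
    have : (0:ℝ) ≤ max (M * w - ∑ t ∈ Finset.Icc (k * M + 1) ((k + 1) * M), u t) 0 :=
      le_max_right _ _
    linarith
end

section
/- Let S be a nonempty finite index set of clients, n₀ ∈ S, and let (Ω, F, P) be a probability space. For each n ∈ S let U_n be a nonnegative integrable real random variable (the number of time slots client n is scheduled in a frame), and let w_n ≥ 0 be constants with W := ∑_{n∈S} w_n > 0. Let M > 0 and α > 0 be real numbers. Suppose E[U_{n₀}] ≥ M·w_{n₀} + M·α, and for every n ≠ n₀, P( U_n ≥ M·w_n ) > 1 − α/(2W). Then ( M·w_{n₀} − E[U_{n₀}] ) + ∑_{n ≠ n₀} E[ ( M·w_n − U_n )⁺ ] ≤ − M·α/2. -/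
open MeasureTheory

/-- Lyapunov drift estimate for the EPDF optimality proof. `U n` is the (nonnegative,
integrable) number of slots client `n` is scheduled in a frame of `M` slots, `w n ≥ 0`
its implied workload, `W = ∑_{n∈S} w n > 0`. If `E[U n₀] ≥ M·w n₀ + M·α` and
`P(U n ≥ M·w n) > 1 − α/(2W)` for every other client `n`, then
`(M·w n₀ − E[U n₀]) + ∑_{n ≠ n₀} E[(M·w n − U n)⁺] ≤ −M·α/2`, with `x⁺ = max(x,0)`. -/
theorem epdf_drift_estimate
    {Ω : Type*} [MeasurableSpace Ω] (P : Measure Ω) [IsProbabilityMeasure P]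
    {ι : Type*} [DecidableEq ι] (S : Finset ι) (hS : S.Nonempty)
    (n₀ : ι) (hn₀ : n₀ ∈ S)
    (U : ι → Ω → ℝ) (hUint : ∀ n ∈ S, Integrable (U n) P)
    (hUnonneg : ∀ n ∈ S, ∀ ω, 0 ≤ U n ω)
    (w : ι → ℝ) (hw : ∀ n ∈ S, 0 ≤ w n)
    (W : ℝ) (hW : W = ∑ n ∈ S, w n) (hWpos : 0 < W)
    (M α : ℝ) (hM : 0 < M) (hα : 0 < α)
    (hmean : M * w n₀ + M * α ≤ ∫ ω, U n₀ ω ∂P)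
    (hprob : ∀ n ∈ S, n ≠ n₀ →
      1 - α / (2 * W) < (P {ω | M * w n ≤ U n ω}).toReal) :
    (M * w n₀ - ∫ ω, U n₀ ω ∂P)
      + ∑ n ∈ S.erase n₀, ∫ ω, max (M * w n - U n ω) 0 ∂P
      ≤ -(M * α / 2) := by
  have key : ∀ n ∈ S.erase n₀,
      ∫ ω, max (M * w n - U n ω) 0 ∂P ≤ M * w n * (α / (2 * W)) := by
    intro n hn
    have hnS : n ∈ S := Finset.mem_of_mem_erase hn
    have hnne : n ≠ n₀ := Finset.ne_of_mem_erase hn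
    have hint := hUint n hnS
    obtain ⟨g, hg, hfg⟩ := hint.1
    set B : Set Ω := {ω | g ω < M * w n} with hBdef
    have hBmeas : MeasurableSet B := measurableSet_lt hg.measurable measurable_const
    have hMw : 0 ≤ M * w n := mul_nonneg hM.le (hw n hnS)
    -- pointwise a.e. bound
    have hae : ∀ᵐ ω ∂P, max (M * w n - U n ω) 0 ≤ B.indicator (fun _ => M * w n) ω := by
      filter_upwards [hfg] with ω hω
      by_cases h : g ω < M * w n
      · rw [Set.indicator_of_mem (show ω ∈ B from h)]
        exact max_le (by linarith [hUnonneg n hnS ω]) hMw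
      · rw [Set.indicator_of_notMem (show ω ∉ B from h)]
        push_neg at h
        have : U n ω = g ω := hω
        have : M * w n - U n ω ≤ 0 := by linarith
        simp [max_le_iff, this]
    have hint1 : Integrable (fun ω => max (M * w n - U n ω) 0) P :=
      ((integrable_const (M * w n)).sub hint).pos_part
    have hint2 : Integrable (B.indicator (fun _ => M * w n)) P :=
      (integrable_const (M * w n)).indicator hBmeas
    have hle := integral_mono_ae hint1 hint2 hae
    have heval : ∫ ω, B.indicator (fun _ => M * w n) ω ∂P
        = (P B).toReal * (M * w n) := by
      rw [integral_indicator_const _ hBmeas]; simp [smul_eq_mul, Measure.real]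
    -- measure of B
    have hcomp : P Bᶜ = P {ω | M * w n ≤ U n ω} := by
      apply measure_congr
      apply Filter.eventuallyEq_set.mpr
      filter_upwards [hfg] with ω hω
      simp [hBdef, hω, not_lt]
    have hsum1 : P B + P Bᶜ = 1 := (measure_add_measure_compl hBmeas).trans measure_univ
    have hBfin : P B ≠ ⊤ := measure_ne_top P B
    have hBcfin : P Bᶜ ≠ ⊤ := measure_ne_top P Bᶜ
    have htr : (P B).toReal + (P Bᶜ).toReal = 1 := by
      rw [← ENNReal.toReal_add hBfin hBcfin, hsum1]; simp
    have hPB : (P B).toReal ≤ α / (2 * W) := by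
      have := hprob n hnS hnne
      rw [← hcomp] at this
      linarith
    calc ∫ ω, max (M * w n - U n ω) 0 ∂P ≤ (P B).toReal * (M * w n) := heval ▸ hle
      _ ≤ (α / (2 * W)) * (M * w n) :=
          mul_le_mul_of_nonneg_right hPB hMw
      _ = M * w n * (α / (2 * W)) := by ring
  have h1 : ∑ n ∈ S.erase n₀, ∫ ω, max (M * w n - U n ω) 0 ∂P
      ≤ ∑ n ∈ S.erase n₀, M * w n * (α / (2 * W)) := Finset.sum_le_sum key
  have hwsum : ∑ n ∈ S.erase n₀, w n ≤ W := by
    rw [hW]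
    exact Finset.sum_le_sum_of_subset_of_nonneg (Finset.erase_subset _ _)
      (fun n hn _ => hw n hn)
  have h2 : ∑ n ∈ S.erase n₀, M * w n * (α / (2 * W)) ≤ M * α / 2 := by
    have heq : ∑ n ∈ S.erase n₀, M * w n * (α / (2 * W))
        = M * (α / (2 * W)) * ∑ n ∈ S.erase n₀, w n := by
      rw [Finset.mul_sum]; apply Finset.sum_congr rfl; intros; ring
    rw [heq]
    have hpos : 0 ≤ M * (α / (2 * W)) :=
      mul_nonneg hM.le (div_nonneg hα.le (by linarith))
    calc M * (α / (2 * W)) * ∑ n ∈ S.erase n₀, w n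
        ≤ M * (α / (2 * W)) * W := mul_le_mul_of_nonneg_left hwsum hpos
      _ = M * α / 2 := by field_simp
  linarith
end

section
/- Let (Ω, F, (F_k)_{k∈ℕ}, P) be a filtered probability space, (L_k)_{k∈ℕ} a sequence of nonnegative integrable real random variables with L_k measurable with respect to F_k, and (A_k)_{k∈ℕ} events with A_k ∈ F_k. Let δ > 0 and B ≥ 0, and suppose that for every k, almost surely E[ L_{k+1} − L_k | F_k ] ≤ −δ on the complement of A_k and E[ L_{k+1} − L_k | F_k ] ≤ B on A_k. Then for every integer T ≥ 1, ∑_{k=0}^{T−1} P(A_k) ≥ ( δ·T − E[L_0] ) / ( δ + B ). -/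
open MeasureTheory

/-- Quantitative Foster–Lyapunov drift bound. `L k` is a nonnegative integrable
Lyapunov function adapted to the filtration `ℱ`, and `A k ∈ ℱ k` is the exceptional
event at stage `k`. If, almost surely, the conditional drift
`E[L (k+1) − L k | ℱ k]` is at most `−δ` off `A k` and at most `B` on `A k`
(with `δ > 0`, `B ≥ 0`), then for every `T ≥ 1` the expected number of stages in the
exceptional set satisfies `∑_{k=0}^{T−1} P(A k) ≥ (δ·T − E[L 0]) / (δ + B)`. -/
theorem foster_lyapunov_drift_bound
    {Ω : Type*} {m0 : MeasurableSpace Ω} (P : Measure Ω) [IsProbabilityMeasure P]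
    (ℱ : Filtration ℕ m0)
    (L : ℕ → Ω → ℝ) (hLint : ∀ k, Integrable (L k) P)
    (hLnonneg : ∀ k, ∀ ω, 0 ≤ L k ω)
    (hLmeas : ∀ k, StronglyMeasurable[ℱ k] (L k))
    (A : ℕ → Set Ω) (hA : ∀ k, MeasurableSet[ℱ k] (A k))
    (δ B : ℝ) (hδ : 0 < δ) (hB : 0 ≤ B)
    (hdrift : ∀ k, ∀ᵐ ω ∂P,
      (ω ∉ A k → (P[fun ω' => L (k + 1) ω' - L k ω' | ℱ k]) ω ≤ -δ) ∧
      (ω ∈ A k → (P[fun ω' => L (k + 1) ω' - L k ω' | ℱ k]) ω ≤ B)) :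
    ∀ T : ℕ, 1 ≤ T →
      (δ * T - ∫ ω, L 0 ω ∂P) / (δ + B)
        ≤ ∑ k ∈ Finset.range T, (P (A k)).toReal := by
  intro T hT
  have hδB : 0 < δ + B := by linarith
  -- per-step bound
  have hstep : ∀ k, (∫ ω, L (k+1) ω ∂P) - (∫ ω, L k ω ∂P)
      ≤ -δ + (δ + B) * (P (A k)).toReal := by
    intro k
    have hDint : Integrable (fun ω => L (k+1) ω - L k ω) P :=
      (hLint (k+1)).sub (hLint k)
    have hAmeas : MeasurableSet (A k) := (ℱ.le k) _ (hA k)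
    have hcond : (∫ ω, (P[fun ω' => L (k + 1) ω' - L k ω' | ℱ k]) ω ∂P)
        = (∫ ω, L (k+1) ω ∂P) - (∫ ω, L k ω ∂P) := by
      rw [integral_condExp (ℱ.le k)]
      exact integral_sub (hLint (k+1)) (hLint k)
    have hgint : Integrable
        (fun ω => -δ + (δ + B) * (A k).indicator (fun _ => (1:ℝ)) ω) P := by
      refine (integrable_const _).add (Integrable.const_mul ?_ _)
      exact (integrable_indicator_iff hAmeas).2
        (integrableOn_const (measure_ne_top P _))
    have hmono : (∫ ω, (P[fun ω' => L (k + 1) ω' - L k ω' | ℱ k]) ω ∂P)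
        ≤ ∫ ω, (-δ + (δ + B) * (A k).indicator (fun _ => (1:ℝ)) ω) ∂P := by
      refine integral_mono_ae integrable_condExp hgint ?_
      filter_upwards [hdrift k] with ω hω
      by_cases hmem : ω ∈ A k
      · simp [Set.indicator_of_mem hmem]
        linarith [hω.2 hmem]
      · simp [Set.indicator_of_notMem hmem]
        exact hω.1 hmem
    have hgval : ∫ ω, (-δ + (δ + B) * (A k).indicator (fun _ => (1:ℝ)) ω) ∂P
        = -δ + (δ + B) * (P (A k)).toReal := by
      rw [integral_add (integrable_const _) (by
        exact Integrable.const_mul ((integrable_indicator_iff hAmeas).2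
          (integrableOn_const (measure_ne_top P _))) _),
        integral_const, integral_const_mul]
      have : ∫ a, (A k).indicator (fun _ => (1:ℝ)) a ∂P = (P (A k)).toReal :=
        integral_indicator_one hAmeas
      rw [this]
      simp
    rw [hcond] at hmono
    rw [hgval] at hmono
    exact hmono
  -- telescoping sum
  have hsum : (∫ ω, L T ω ∂P) - (∫ ω, L 0 ω ∂P)
      ≤ ∑ k ∈ Finset.range T, (-δ + (δ + B) * (P (A k)).toReal) := by
    have := Finset.sum_le_sum (fun k (_ : k ∈ Finset.range T) => hstep k)
    rwa [Finset.sum_range_sub (fun k => ∫ ω, L k ω ∂P)] at this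
  have hLT : 0 ≤ ∫ ω, L T ω ∂P := integral_nonneg (hLnonneg T)
  have hsum' : δ * T - (∫ ω, L 0 ω ∂P)
      ≤ (δ + B) * ∑ k ∈ Finset.range T, (P (A k)).toReal := by
    have : ∑ k ∈ Finset.range T, (-δ + (δ + B) * (P (A k)).toReal)
        = -(δ * T) + (δ + B) * ∑ k ∈ Finset.range T, (P (A k)).toReal := by
      rw [Finset.sum_add_distrib, Finset.sum_const, ← Finset.mul_sum]
      simp [mul_comm]
    rw [this] at hsum
    linarith
  rw [div_le_iff₀ hδB]
  linarith [hsum']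
end
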